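/- arXiv:1310.5233 — 2 statements merged into one kernel-verified Lean document; each statement's English description precedes it below -/
import Mathlib

section
/- Let $a, b, c, e \ge 0$, $L > 0$ satisfy $b < 1 - L e$ and $a < 1 - L^{-1} c$. Suppose vectors satisfy the cross-form bounds $\|\Delta\theta\| \le b\|\Delta\bar\theta\| + e\|\Delta r\|$ and $\|\Delta\bar r\| \le a\|\Delta r\| + c\|\Delta\bar\theta\|$. If $\|\Delta r\| \le L\|\Delta\theta\|$, then $\|\Delta\theta\| \le \frac{b}{1 - L e}\|\Delta\bar\theta\|$ and $\|\Delta\bar r\| \le \left(\frac{L a b}{1 - L e} + c\right)\|\Delta\bar\theta\|$; in particular the unstable cone $\|\Delta r\| \le L\|\Delta\theta\|$ is mapped into the cone $\|\Delta\bar r\| \le L\|\Delta\bar\theta\|$ and $\|\Delta\bar\theta\| \ge \frac{1 - Le}{b}\|\Delta\theta\|$ with $\frac{1-Le}{b} > 1$. -/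
/-!
Feeding the cone condition `Δr ≤ L Δθ` into the first cross-form bound gives
`(1 - L e) Δθ ≤ b Δθ̄`, i.e. `Δθ ≤ κ Δθ̄` with `κ = b / (1 - L e) < 1`. Substituting this into
the second cross-form bound controls `Δr̄` by `(L a κ + c) Δθ̄`, and `L a κ + c ≤ L a + c < L`
is exactly the hypothesis `a < 1 - L⁻¹ c`.
-/

section ConeEstimates

variable {a b c e L κ dr dθ dr' dθ' : ℝ}

lemma one_sub_mul_mul_le_of_cone (he : 0 ≤ e) (hcross : dθ ≤ b * dθ' + e * dr)
    (hcone : dr ≤ L * dθ) : (1 - L * e) * dθ ≤ b * dθ' := by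
  linarith [mul_le_mul_of_nonneg_left hcone he]

lemma le_mul_of_cross_of_cone (ha : 0 ≤ a) (hL : 0 ≤ L) (hcross : dr' ≤ a * dr + c * dθ')
    (hcone : dr ≤ L * dθ) (hθ : dθ ≤ κ * dθ') : dr' ≤ (L * a * κ + c) * dθ' := by
  linarith [mul_le_mul_of_nonneg_left hcone ha,
    mul_le_mul_of_nonneg_left hθ (mul_nonneg ha hL)]

lemma mul_mul_add_le_of_lt_one_sub_inv_mul (ha : 0 ≤ a) (hL : 0 < L)
    (h : a < 1 - L⁻¹ * c) (hκ : κ ≤ 1) : L * a * κ + c ≤ L := by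
  have hLa : L * a < L - c := by
    calc L * a < L * (1 - L⁻¹ * c) := mul_lt_mul_of_pos_left h hL
      _ = L - c := by field_simp
  nlinarith [mul_le_mul_of_nonneg_left hκ (mul_nonneg hL.le ha)]

end ConeEstimates

theorem stmt11_general (a b c e L dr dθ dr' dθ' : ℝ)
    (ha0 : 0 ≤ a) (hb0 : 0 < b) (he0 : 0 ≤ e) (hL : 0 < L)
    (h1 : b < 1 - L * e) (h2 : a < 1 - L⁻¹ * c)
    (hdθ' : 0 ≤ dθ')
    (hcross1 : dθ ≤ b * dθ' + e * dr) (hcross2 : dr' ≤ a * dr + c * dθ')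
    (hcone : dr ≤ L * dθ) :
    dθ ≤ b / (1 - L * e) * dθ' ∧
    dr' ≤ (L * a * b / (1 - L * e) + c) * dθ' ∧
    dr' ≤ L * dθ' ∧
    (1 - L * e) / b * dθ ≤ dθ' ∧
    1 < (1 - L * e) / b := by
  have hpos : 0 < 1 - L * e := hb0.trans h1
  have hcontract := one_sub_mul_mul_le_of_cone he0 hcross1 hcone
  have hθ : dθ ≤ b / (1 - L * e) * dθ' := by
    rwa [div_mul_eq_mul_div, le_div_iff₀' hpos]
  have hr := le_mul_of_cross_of_cone ha0 hL.le hcross2 hcone hθ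
  have hcoeff : L * a * (b / (1 - L * e)) + c ≤ L :=
    mul_mul_add_le_of_lt_one_sub_inv_mul ha0 hL h2 ((div_lt_one hpos).2 h1).le
  rw [← mul_div_assoc] at hr hcoeff
  exact ⟨hθ, hr, hr.trans (mul_le_mul_of_nonneg_right hcoeff hdθ'),
    by rwa [div_mul_eq_mul_div, div_le_iff₀' hb0], (one_lt_div hb0).2 h1⟩

/-- the unstable cone-field estimates (24)–(25). -/
theorem stmt11 (a b c e L dr dθ dr' dθ' : ℝ)
    (ha0 : 0 ≤ a) (hb0 : 0 < b) (hc0 : 0 ≤ c) (he0 : 0 ≤ e) (hL : 0 < L)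
    (h1 : b < 1 - L * e) (h2 : a < 1 - L⁻¹ * c)
    (hdr : 0 ≤ dr) (hdθ : 0 ≤ dθ) (hdr' : 0 ≤ dr') (hdθ' : 0 ≤ dθ')
    (hcross1 : dθ ≤ b * dθ' + e * dr) (hcross2 : dr' ≤ a * dr + c * dθ')
    (hcone : dr ≤ L * dθ) :
    dθ ≤ b / (1 - L * e) * dθ' ∧
    dr' ≤ (L * a * b / (1 - L * e) + c) * dθ' ∧
    dr' ≤ L * dθ' ∧
    (1 - L * e) / b * dθ ≤ dθ' ∧
    1 < (1 - L * e) / b :=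
  stmt11_general a b c e L dr dθ dr' dθ' ha0 hb0 he0 hL h1 h2 hdθ' hcross1 hcross2 hcone
end

section
/- Let $a, b, c, e \ge 0$, $L > 0$ satisfy $a < 1 - L^{-1} c$ and $b < 1 - L e$. Suppose $\|\Delta\bar r\| \le a\|\Delta r\| + c\|\Delta\bar\theta\|$ and $\|\Delta\theta\| \le b\|\Delta\bar\theta\| + e\|\Delta r\|$. If $\|\Delta\bar\theta\| \le L^{-1}\|\Delta\bar r\|$, then $\|\Delta\bar r\| \le \frac{a}{1 - L^{-1}c}\|\Delta r\|$ and $\|\Delta\theta\| \le \left(\frac{L^{-1} a b}{1 - L^{-1}c} + e\right)\|\Delta r\|$; in particular the stable cone is invariant under the inverse and the inverse expands $\|\Delta r\|$ by a factor at least $\frac{1 - L^{-1}c}{a} > 1$. -/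
/-!
Substituting the cone condition `Δθ̄ ≤ L⁻¹ Δr̄` into the first cross estimate absorbs its
`c`-term, leaving `(1 - L⁻¹ c) Δr̄ ≤ a Δr`. Feeding this bound on `Δr̄` into the second cross
estimate bounds `Δθ`; since `a / (1 - L⁻¹ c) ≤ 1` and `L⁻¹ b ≤ L⁻¹ - e`, the resulting
coefficient is at most `L⁻¹`, which is the invariance of the cone.
-/

lemma one_sub_mul_le_of_le_add_of_le_mul {a c κ r r' θ' : ℝ} (hc : 0 ≤ c)
    (hr' : r' ≤ a * r + c * θ') (hθ' : θ' ≤ κ * r') : (1 - κ * c) * r' ≤ a * r := by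
  have := mul_le_mul_of_nonneg_left hθ' hc
  linarith

lemma le_mul_of_le_add_of_le_mul {b e κ q r r' θ θ' : ℝ} (hb : 0 ≤ b) (hκ : 0 ≤ κ)
    (hθ : θ ≤ b * θ' + e * r) (hθ' : θ' ≤ κ * r') (hr' : r' ≤ q * r) :
    θ ≤ (κ * q * b + e) * r := by
  have : b * θ' ≤ b * (κ * (q * r)) :=
    mul_le_mul_of_nonneg_left (hθ'.trans (mul_le_mul_of_nonneg_left hr' hκ)) hb
  linarith

lemma inv_mul_mul_add_le_inv {b e L q : ℝ} (hL : 0 < L) (hb : 0 ≤ b) (hq : q ≤ 1)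
    (hbe : b < 1 - L * e) : L⁻¹ * q * b + e ≤ L⁻¹ := by
  have hLb : 0 ≤ L⁻¹ * b := by positivity
  have hq' : L⁻¹ * b * q ≤ L⁻¹ * b := mul_le_of_le_one_right hLb hq
  have hbe' : L⁻¹ * b ≤ L⁻¹ * (1 - L * e) := mul_le_mul_of_nonneg_left hbe.le (by positivity)
  have : L⁻¹ * (1 - L * e) = L⁻¹ - e := by field_simp
  linarith

theorem stmt12_general (a b c e L dr dθ dr' dθ' : ℝ)
    (ha0 : 0 < a) (hb0 : 0 ≤ b) (hc0 : 0 ≤ c) (hL : 0 < L)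
    (h1 : a < 1 - L⁻¹ * c) (h2 : b < 1 - L * e)
    (hdr : 0 ≤ dr)
    (hcross1 : dr' ≤ a * dr + c * dθ') (hcross2 : dθ ≤ b * dθ' + e * dr)
    (hcone : dθ' ≤ L⁻¹ * dr') :
    dr' ≤ a / (1 - L⁻¹ * c) * dr ∧
    dθ ≤ (L⁻¹ * a * b / (1 - L⁻¹ * c) + e) * dr ∧
    dθ ≤ L⁻¹ * dr ∧
    (1 - L⁻¹ * c) / a * dr' ≤ dr ∧
    1 < (1 - L⁻¹ * c) / a := by
  have hD : 0 < 1 - L⁻¹ * c := ha0.trans h1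
  have hkey := one_sub_mul_le_of_le_add_of_le_mul hc0 hcross1 hcone
  have hr' : dr' ≤ a / (1 - L⁻¹ * c) * dr := by
    rwa [div_mul_eq_mul_div, le_div_iff₀ hD, mul_comm]
  have hθ := le_mul_of_le_add_of_le_mul hb0 (inv_pos.mpr hL).le hcross2 hcone hr'
  have hcoef := inv_mul_mul_add_le_inv hL hb0 ((div_le_one hD).mpr h1.le) h2
  refine ⟨hr', hθ.trans_eq (by ring), hθ.trans (mul_le_mul_of_nonneg_right hcoef hdr), ?_,
    (one_lt_div ha0).mpr h1⟩
  rwa [div_mul_eq_mul_div, div_le_iff₀ ha0, mul_comm dr]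

/-- the stable cone-field estimates (26)–(27). -/
theorem stmt12 (a b c e L dr dθ dr' dθ' : ℝ)
    (ha0 : 0 < a) (hb0 : 0 ≤ b) (hc0 : 0 ≤ c) (he0 : 0 ≤ e) (hL : 0 < L)
    (h1 : a < 1 - L⁻¹ * c) (h2 : b < 1 - L * e)
    (hdr : 0 ≤ dr) (hdθ : 0 ≤ dθ) (hdr' : 0 ≤ dr') (hdθ' : 0 ≤ dθ')
    (hcross1 : dr' ≤ a * dr + c * dθ') (hcross2 : dθ ≤ b * dθ' + e * dr)
    (hcone : dθ' ≤ L⁻¹ * dr') :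
    dr' ≤ a / (1 - L⁻¹ * c) * dr ∧
    dθ ≤ (L⁻¹ * a * b / (1 - L⁻¹ * c) + e) * dr ∧
    dθ ≤ L⁻¹ * dr ∧
    (1 - L⁻¹ * c) / a * dr' ≤ dr ∧
    1 < (1 - L⁻¹ * c) / a :=
  stmt12_general a b c e L dr dθ dr' dθ' ha0 hb0 hc0 hL h1 h2 hdr hcross1 hcross2 hcone
end
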